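/- Let ρ be a density matrix on ℂ^{d_A} ⊗ ℂ^{d_B}, let A₀, A₁ be Hermitian d_A×d_A matrices with A₀² = A₁² = I, and B₀, B₁ Hermitian d_B×d_B matrices with B₀² = B₁² = I. Let S = Tr[ρ(A₀⊗B₀ + A₀⊗B₁ + A₁⊗B₀ − A₁⊗B₁)]. Then for each y ∈ {0,1}, (Tr[ρ(I ⊗ B_y)])² ≤ 2 − S²/4. -/
import Mathlib

open Matrix
open scoped Kronecker ComplexOrder

private lemma trace_re_nonneg' {n : Type*} [Fintype n] [DecidableEq n] {M : Matrix n n ℂ}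
    (h : M.PosSemidef) : 0 ≤ M.trace.re := by
  have hre : M.trace.re = ∑ i, (M i i).re := by
    simp [Matrix.trace, Matrix.diag, Complex.re_sum]
  rw [hre]
  refine Finset.sum_nonneg fun i _ => ?_
  have h2 := h.re_dotProduct_nonneg (Pi.single i 1)
  simpa [dotProduct, Matrix.mulVec, Pi.single_apply, Finset.sum_ite_eq,
    mul_comm] using h2

private lemma tr_pos' {n : Type*} [Fintype n] [DecidableEq n]
    (ρ W : Matrix n n ℂ) (hρ : ρ.PosSemidef) :
    0 ≤ ((ρ * (Wᴴ * W)).trace).re := by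
  have h1 : (ρ * (Wᴴ * W)).trace = (W * ρ * Wᴴ).trace := by
    rw [← mul_assoc, trace_mul_cycle]
  rw [h1]
  exact trace_re_nonneg' (hρ.mul_mul_conjTranspose_same W)

set_option maxHeartbeats 2000000 in
private lemma chsh_core {n : Type*} [Fintype n] [DecidableEq n]
    (ρ u v p m : Matrix n n ℂ) (hρ : ρ.PosSemidef) (hρtr : ρ.trace = 1)
    (hu : uᴴ = u) (hv : vᴴ = v) (hp : pᴴ = p) (hm : mᴴ = m)
    (h1 : u * u = p * p) (h2 : v * v = m * m)
    (h3 : u * m + m * u = 0) (h4 : v * p + p * v = 0) (h6 : p * m + m * p = 0)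
    (h5 : p * p + m * m = (4 : ℂ) • 1)
    (ε : ℝ) (hε : ε = 1 ∨ ε = -1) :
    (((ρ * (u + v)).trace).re) ^ 2 + (((ρ * (p + (ε : ℂ) • m)).trace).re) ^ 2 ≤ 8 := by
  set T : ℝ := ((ρ * (u + v)).trace).re with hT
  set D : ℝ := ((ρ * (p + (ε : ℂ) • m)).trace).re with hD
  set X : Matrix n n ℂ := (T : ℂ) • (u + v) + (D : ℂ) • (p + (ε : ℂ) • m) with hX
  set Z : Matrix n n ℂ := (T : ℂ) • (u - v) - (D : ℂ) • (p - (ε : ℂ) • m) with hZ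
  have h3' : m * u = -(u * m) := eq_neg_of_add_eq_zero_right h3
  have h4' : p * v = -(v * p) := eq_neg_of_add_eq_zero_right h4
  have h6' : m * p = -(p * m) := eq_neg_of_add_eq_zero_right h6
  have h5' : m * m = (4 : ℂ) • 1 - p * p := by rw [← h5]; abel
  have key : X * X + Z * Z = ((8 * (T ^ 2 + D ^ 2) : ℝ) : ℂ) • 1 := by
    rcases hε with rfl | rfl <;>
    · push_cast
      simp only [hX, hZ, mul_add, add_mul, mul_sub, sub_mul, smul_mul_assoc,
        mul_smul_comm, smul_smul, smul_add, smul_sub, h1, h2, h3', h4', h6', h5']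
      module
  -- Hermiticity of X and Z
  have hXh : Xᴴ = X := by
    simp [hX, conjTranspose_add, conjTranspose_smul, conjTranspose_sub, hu, hv, hp, hm,
      Complex.star_def, Complex.conj_ofReal]
  have hZh : Zᴴ = Z := by
    simp [hZ, conjTranspose_add, conjTranspose_smul, conjTranspose_sub, hu, hv, hp, hm,
      Complex.star_def, Complex.conj_ofReal]
  -- trace of X
  have hT' : T = ((ρ * u).trace).re + ((ρ * v).trace).re := by
    rw [hT]; simp [Matrix.mul_add, Matrix.trace_add, Complex.add_re]
  have hD' : D = ((ρ * p).trace).re + ε * ((ρ * m).trace).re := by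
    rw [hD]; simp [Matrix.mul_add, Matrix.mul_smul, Matrix.trace_add, Matrix.trace_smul,
      smul_eq_mul, Complex.add_re, Complex.re_ofReal_mul]
  have hXre : ((ρ * X).trace).re = T * T + D * D := by
    simp only [hX, Matrix.mul_add, Matrix.mul_smul, Matrix.trace_add, Matrix.trace_smul,
      smul_eq_mul, Complex.add_re, Complex.re_ofReal_mul]
    rw [hT', hD']
  -- variance inequality : (T*T+D*D)^2 ≤ re tr(ρ X X)
  set x : ℝ := T * T + D * D with hx
  have hxnn : 0 ≤ x := by nlinarith [sq_nonneg T, sq_nonneg D]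
  set Y : Matrix n n ℂ := X - (x : ℂ) • 1 with hY
  have hYh : Yᴴ = Y := by
    simp [hY, conjTranspose_sub, conjTranspose_smul, hXh, Complex.star_def,
      Complex.conj_ofReal]
  have hYY : Y * Y = X * X - ((2 * x : ℝ) : ℂ) • X + ((x * x : ℝ) : ℂ) • 1 := by
    push_cast
    simp only [hY, mul_sub, sub_mul, smul_mul_assoc, mul_smul_comm, smul_smul,
      one_mul, mul_one]
    module
  have hpos2 := tr_pos' ρ Y hρ
  rw [hYh, hYY] at hpos2
  have hexp2 : ((ρ * (X * X - ((2 * x : ℝ) : ℂ) • X + ((x * x : ℝ) : ℂ) • 1)).trace).re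
      = ((ρ * (X * X)).trace).re - 2 * x * (((ρ * X).trace).re) + x * x := by
    simp [Matrix.mul_sub, Matrix.mul_add, Matrix.mul_smul, Matrix.trace_sub,
      Matrix.trace_add, Matrix.trace_smul, smul_eq_mul, Complex.add_re, Complex.sub_re,
      Complex.re_ofReal_mul, mul_one, hρtr]
  rw [hexp2, hXre] at hpos2
  -- tr(ρ X X) + tr(ρ Z Z) = 8(T²+D²)
  have hpos1 := tr_pos' ρ Z hρ
  rw [hZh] at hpos1
  have htr : ((ρ * (X * X)).trace).re + ((ρ * (Z * Z)).trace).re = 8 * (T ^ 2 + D ^ 2) := by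
    have e1 : ρ * (X * X) + ρ * (Z * Z) = ((8 * (T ^ 2 + D ^ 2) : ℝ) : ℂ) • ρ := by
      rw [← Matrix.mul_add, key, Matrix.mul_smul, Matrix.mul_one]
    have e2 : ((ρ * (X * X)).trace + (ρ * (Z * Z)).trace)
        = (((8 * (T ^ 2 + D ^ 2) : ℝ) : ℂ) • ρ).trace := by
      rw [← Matrix.trace_add, e1]
    have e3 : (((8 * (T ^ 2 + D ^ 2) : ℝ) : ℂ) • ρ).trace
        = ((8 * (T ^ 2 + D ^ 2) : ℝ) : ℂ) := by
      rw [Matrix.trace_smul, hρtr, smul_eq_mul, mul_one]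
    have h := congrArg Complex.re (e2.trans e3)
    simpa [Complex.add_re, ← Complex.ofReal_pow] using h
  -- combine
  have hxle : x * x ≤ 8 * x := by nlinarith [hpos1, hpos2, htr]
  nlinarith [hxnn, hxle, sq_nonneg T, sq_nonneg D]

private lemma kron_conjT {l n : Type*} [Fintype l] [Fintype n]
    (A : Matrix l l ℂ) (B : Matrix n n ℂ) : (A ⊗ₖ B)ᴴ = Aᴴ ⊗ₖ Bᴴ := by
  ext ⟨i, j⟩ ⟨k, l⟩
  simp [Matrix.conjTranspose_apply, Matrix.kroneckerMap_apply, star_mul']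

private lemma kron_sub {l n : Type*} [Fintype l] [Fintype n]
    (A : Matrix l l ℂ) (B C : Matrix n n ℂ) : A ⊗ₖ (B - C) = A ⊗ₖ B - A ⊗ₖ C := by
  ext ⟨i, j⟩ ⟨k, l⟩
  simp [Matrix.kroneckerMap_apply, Matrix.sub_apply, mul_sub]

/-- marginal-bias bound ⟨B_y⟩² ≤ 2 − S²/4 from the CHSH value S. -/
theorem chsh_marginal_bias_bound (dA dB : ℕ)
    (ρ : Matrix (Fin dA × Fin dB) (Fin dA × Fin dB) ℂ)
    (hρ : ρ.PosSemidef) (hρtr : ρ.trace = 1)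
    (A₀ A₁ : Matrix (Fin dA) (Fin dA) ℂ)
    (B₀ B₁ : Matrix (Fin dB) (Fin dB) ℂ)
    (hA₀ : A₀.IsHermitian) (hA₁ : A₁.IsHermitian)
    (hA₀2 : A₀ * A₀ = 1) (hA₁2 : A₁ * A₁ = 1)
    (hB₀ : B₀.IsHermitian) (hB₁ : B₁.IsHermitian)
    (hB₀2 : B₀ * B₀ = 1) (hB₁2 : B₁ * B₁ = 1) :
    let S : ℝ := ((ρ * (A₀ ⊗ₖ B₀ + A₀ ⊗ₖ B₁ + A₁ ⊗ₖ B₀ - A₁ ⊗ₖ B₁)).trace).re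
    (((ρ * ((1 : Matrix (Fin dA) (Fin dA) ℂ) ⊗ₖ B₀)).trace).re ^ 2 ≤ 2 - S ^ 2 / 4)
    ∧ (((ρ * ((1 : Matrix (Fin dA) (Fin dA) ℂ) ⊗ₖ B₁)).trace).re ^ 2 ≤ 2 - S ^ 2 / 4) := by
  intro S
  have hS : S = ((ρ * (A₀ ⊗ₖ B₀ + A₀ ⊗ₖ B₁ + A₁ ⊗ₖ B₀ - A₁ ⊗ₖ B₁)).trace).re := rfl
  set P : Matrix (Fin dB) (Fin dB) ℂ := B₀ + B₁ with hPdef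
  set M : Matrix (Fin dB) (Fin dB) ℂ := B₀ - B₁ with hMdef
  -- B-side algebraic identities
  have hPM : P * M + M * P = 0 := by
    have e : P * M + M * P = (B₀ * B₀ + B₀ * B₀) - (B₁ * B₁ + B₁ * B₁) := by
      rw [hPdef, hMdef]; noncomm_ring
    rw [e, hB₀2, hB₁2]; simp
  have hMP : M * P + P * M = 0 := by rw [add_comm]; exact hPM
  have hP2M2 : P * P + M * M = (4 : ℂ) • 1 := by
    have e : P * P + M * M = (B₀ * B₀ + B₀ * B₀) + (B₁ * B₁ + B₁ * B₁) := by
      rw [hPdef, hMdef]; noncomm_ring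
    rw [e, hB₀2, hB₁2]; module
  -- the four operators
  set u : Matrix (Fin dA × Fin dB) (Fin dA × Fin dB) ℂ := A₀ ⊗ₖ P with hupd
  set v : Matrix (Fin dA × Fin dB) (Fin dA × Fin dB) ℂ := A₁ ⊗ₖ M with hvpd
  set p : Matrix (Fin dA × Fin dB) (Fin dA × Fin dB) ℂ := (1 : Matrix (Fin dA) (Fin dA) ℂ) ⊗ₖ P with hppd
  set m : Matrix (Fin dA × Fin dB) (Fin dA × Fin dB) ℂ := (1 : Matrix (Fin dA) (Fin dA) ℂ) ⊗ₖ M with hmpd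
  have hPh : Pᴴ = P := by rw [hPdef, conjTranspose_add, hB₀.eq, hB₁.eq]
  have hMh : Mᴴ = M := by rw [hMdef, conjTranspose_sub, hB₀.eq, hB₁.eq]
  have hu : uᴴ = u := by rw [hupd, kron_conjT, hA₀.eq, hPh]
  have hv : vᴴ = v := by rw [hvpd, kron_conjT, hA₁.eq, hMh]
  have hp : pᴴ = p := by rw [hppd, kron_conjT, conjTranspose_one, hPh]
  have hm : mᴴ = m := by rw [hmpd, kron_conjT, conjTranspose_one, hMh]
  have h1 : u * u = p * p := by
    rw [hupd, hppd, ← mul_kronecker_mul, ← mul_kronecker_mul, hA₀2, Matrix.one_mul]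
  have h2 : v * v = m * m := by
    rw [hvpd, hmpd, ← mul_kronecker_mul, ← mul_kronecker_mul, hA₁2, Matrix.one_mul]
  have h3 : u * m + m * u = 0 := by
    rw [hupd, hmpd, ← mul_kronecker_mul, ← mul_kronecker_mul, Matrix.mul_one, Matrix.one_mul,
      ← kronecker_add, hPM, kronecker_zero]
  have h4 : v * p + p * v = 0 := by
    rw [hvpd, hppd, ← mul_kronecker_mul, ← mul_kronecker_mul, Matrix.mul_one, Matrix.one_mul,
      ← kronecker_add, hMP, kronecker_zero]
  have h6 : p * m + m * p = 0 := by
    rw [hppd, hmpd, ← mul_kronecker_mul, ← mul_kronecker_mul, Matrix.one_mul,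
      ← kronecker_add, hPM, kronecker_zero]
  have h5 : p * p + m * m = (4 : ℂ) • 1 := by
    rw [hppd, hmpd, ← mul_kronecker_mul, ← mul_kronecker_mul, Matrix.one_mul,
      ← kronecker_add, hP2M2, kronecker_smul, one_kronecker_one]
  -- CHSH operator
  have huv : u + v = A₀ ⊗ₖ B₀ + A₀ ⊗ₖ B₁ + A₁ ⊗ₖ B₀ - A₁ ⊗ₖ B₁ := by
    rw [hupd, hvpd, hPdef, hMdef, kronecker_add, kron_sub]; abel
  constructor
  · have K := chsh_core ρ u v p m hρ hρtr hu hv hp hm h1 h2 h3 h4 h6 h5 1 (Or.inl rfl)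
    have hpm1 : p + ((1 : ℝ) : ℂ) • m = (2 : ℂ) • ((1 : Matrix (Fin dA) (Fin dA) ℂ) ⊗ₖ B₀) := by
      simp only [Complex.ofReal_one, one_smul]
      rw [hppd, hmpd, ← kronecker_add,
        show P + M = (2 : ℂ) • B₀ by rw [hPdef, hMdef]; module, kronecker_smul]
    rw [huv, hpm1] at K
    have e2 : ((ρ * ((2 : ℂ) • ((1 : Matrix (Fin dA) (Fin dA) ℂ) ⊗ₖ B₀))).trace).re
        = 2 * ((ρ * ((1 : Matrix (Fin dA) (Fin dA) ℂ) ⊗ₖ B₀)).trace).re := by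
      rw [Matrix.mul_smul, Matrix.trace_smul, smul_eq_mul]
      simp [Complex.mul_re]
    rw [e2, ← hS] at K
    nlinarith [K]
  · have K := chsh_core ρ u v p m hρ hρtr hu hv hp hm h1 h2 h3 h4 h6 h5 (-1) (Or.inr rfl)
    have hpm1 : p + ((-1 : ℝ) : ℂ) • m = (2 : ℂ) • ((1 : Matrix (Fin dA) (Fin dA) ℂ) ⊗ₖ B₁) := by
      simp only [Complex.ofReal_neg, Complex.ofReal_one, neg_smul, one_smul, ← sub_eq_add_neg]
      rw [hppd, hmpd, ← kron_sub,
        show P - M = (2 : ℂ) • B₁ by rw [hPdef, hMdef]; module, kronecker_smul]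
    rw [huv, hpm1] at K
    have e2 : ((ρ * ((2 : ℂ) • ((1 : Matrix (Fin dA) (Fin dA) ℂ) ⊗ₖ B₁))).trace).re
        = 2 * ((ρ * ((1 : Matrix (Fin dA) (Fin dA) ℂ) ⊗ₖ B₁)).trace).re := by
      rw [Matrix.mul_smul, Matrix.trace_smul, smul_eq_mul]
      simp [Complex.mul_re]
    rw [e2, ← hS] at K
    nlinarith [K]
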